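/- The following statements are equivalent: (a) 𝓜₀ is a closed and convex subset of X*×ℝ (weak*-topology on X* times the usual topology on ℝ); (b) for every c ∈ X* such that inf_{x∈F} ⟨c,x⟩ > −∞, there exists (ū, λ̄) ∈ 𝒰 × S⁺ with inf_{x∈X} [⟨c,x⟩ + λ̄(G_ū(x))] = inf_{x∈F} ⟨c,x⟩; that is, the robust strong duality inf(RP_c) = max(RD_c), with the dual supremum attained, holds for all such c. -/

import Mathlib

/-!
Weak duality puts `𝓜₀` inside `epi σ_F`, the epigraph of the support function of the feasible
set `F`, and separating `(x, 0)` from the `S`-epigraph of `G_u` shows that `F` is exactly the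
solution set of the linear system `⟨x*, x⟩ ≤ r`, `(x*, r) ∈ 𝓜₀`. As `𝓜₀` is a cone containing
`(0, 1)`, separation in `X* × ℝ` (whose dual is `X × ℝ`) shows that a closed convex `𝓜₀` is all of
`epi σ_F`; conversely `epi σ_F` is always closed and convex. Finally `𝓜₀ = epi σ_F` says exactly
that `(-c, -inf_F c) ∈ 𝓜₀` whenever this infimum is finite, which is strong duality with dual
attainment.
-/

open Pointwise

instance WeakDual.instLocallyConvexSpace {X : Type*} [AddCommGroup X] [Module ℝ X]
    [TopologicalSpace X] : LocallyConvexSpace ℝ (WeakDual ℝ X) :=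
  WeakBilin.locallyConvexSpace

theorem WeakDual.exists_eval_add_mul {X : Type*} [AddCommGroup X] [Module ℝ X]
    [TopologicalSpace X] (f : (WeakDual ℝ X × ℝ) →L[ℝ] ℝ) :
    ∃ (y : X) (s : ℝ), ∀ q : WeakDual ℝ X × ℝ, f q = q.1 y + s * q.2 := by
  obtain ⟨y, hy⟩ := LinearMap.dualEmbedding_surjective (topDualPairing ℝ X)
    (f.comp (.inl ℝ _ ℝ))
  have hy' (l : WeakDual ℝ X) : f (l, 0) = l y := (DFunLike.congr_fun hy l).symm
  refine ⟨y, f (0, 1), fun q => ?_⟩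
  have hq : q = (q.1, 0) + q.2 • ((0 : WeakDual ℝ X), (1 : ℝ)) := by simp
  rw [hq, map_add, map_smul, hy']
  simp [mul_comm]

theorem nonneg_of_forall_le_mul {a c : ℝ} (h : ∀ t : ℝ, 0 ≤ t → a ≤ t * c) : 0 ≤ c := by
  by_contra! hc
  have hc0 : c ≠ 0 := hc.ne
  have key : (|a| + 1) / -c * c = -(|a| + 1) := by field_simp
  have ha := h ((|a| + 1) / -c) (div_nonneg (by positivity) (neg_nonneg.2 hc.le))
  rw [key] at ha
  linarith [neg_abs_le a]

section Duality

open Set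

variable {X : Type*} [AddCommGroup X] [Module ℝ X] [TopologicalSpace X]

def supportEpigraph (F : Set X) : Set (WeakDual ℝ X × ℝ) := {q | ∀ x ∈ F, q.1 x ≤ q.2}

def solutionSet (M : Set (WeakDual ℝ X × ℝ)) : Set X := {x | ∀ q ∈ M, q.1 x ≤ q.2}

theorem isClosed_supportEpigraph (F : Set X) : IsClosed (supportEpigraph F) := by
  simp only [supportEpigraph, ofPred_forall]
  exact isClosed_biInter fun x _ =>
    isClosed_le ((WeakDual.eval_continuous x).comp continuous_fst) continuous_snd

theorem convex_supportEpigraph (F : Set X) : Convex ℝ (supportEpigraph F) := by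
  intro q hq q' hq' a b ha hb _ x hx
  change a * q.1 x + b * q'.1 x ≤ a * q.2 + b * q'.2
  nlinarith [hq x hx, hq' x hx]

theorem subset_supportEpigraph_solutionSet (M : Set (WeakDual ℝ X × ℝ)) :
    M ⊆ supportEpigraph (solutionSet M) := fun _ hq _ hx => hx _ hq

/-- The points `(1 + t s)⁻¹ • (x₀ - t • y)`, `t ≥ 0`, all solve the system `M`; evaluating a
member of `supportEpigraph (solutionSet M)` along them and letting `t → ∞` gives the claim. -/
theorem add_mul_nonneg_of_mem_supportEpigraph_solutionSet {M : Set (WeakDual ℝ X × ℝ)}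
    {x₀ y : X} {s : ℝ} (hx₀ : x₀ ∈ solutionSet M) (hs : 0 ≤ s)
    (hM : ∀ q ∈ M, 0 ≤ q.1 y + s * q.2) {q : WeakDual ℝ X × ℝ}
    (hq : q ∈ supportEpigraph (solutionSet M)) : 0 ≤ q.1 y + s * q.2 := by
  have key (p : WeakDual ℝ X × ℝ) (t : ℝ) (ht : 0 ≤ t) :
      p.1 ((1 + t * s)⁻¹ • (x₀ - t • y)) ≤ p.2 ↔ p.1 x₀ - p.2 ≤ t * (p.1 y + s * p.2) := by
    have hts : 0 < 1 + t * s := by positivity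
    rw [map_smul, map_sub, map_smul, smul_eq_mul, smul_eq_mul, inv_mul_le_iff₀ hts]
    constructor <;> intro h <;> linarith
  refine nonneg_of_forall_le_mul fun t ht => (key q t ht).1 (hq _ fun p hp => (key p t ht).2 ?_)
  nlinarith [hx₀ p hp, hM p hp]

theorem supportEpigraph_solutionSet_subset {M : Set (WeakDual ℝ X × ℝ)} (hM_closed : IsClosed M)
    (hM_conv : Convex ℝ M) (hM_cone : ∀ q ∈ M, ∀ t : ℝ, 0 ≤ t → t • q ∈ M)
    (hM_one : ((0 : WeakDual ℝ X), (1 : ℝ)) ∈ M) (hsol : (solutionSet M).Nonempty) :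
    supportEpigraph (solutionSet M) ⊆ M := by
  intro q hq
  by_contra hqM
  obtain ⟨f, β, hfq, hfM⟩ := geometric_hahn_banach_point_closed hM_conv hM_closed hqM
  obtain ⟨y, s, hf⟩ := WeakDual.exists_eval_add_mul f
  have hβ : β < 0 := by simpa using hfM 0 (by simpa using hM_cone _ hM_one 0 le_rfl)
  have hf_nonneg : ∀ p ∈ M, 0 ≤ f p := fun p hp =>
    nonneg_of_forall_le_mul (a := β) fun t ht => by
      simpa using (hfM _ (hM_cone p hp t ht)).le
  have hs : 0 ≤ s := by
    simpa [hf, show (0 : WeakDual ℝ X) y = 0 from rfl] using hf_nonneg _ hM_one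
  obtain ⟨x₀, hx₀⟩ := hsol
  have := add_mul_nonneg_of_mem_supportEpigraph_solutionSet hx₀ hs
    (fun p hp => hf p ▸ hf_nonneg p hp) hq
  linarith [hf q]

theorem isClosed_and_convex_iff_eq_supportEpigraph {M : Set (WeakDual ℝ X × ℝ)}
    (hM_cone : ∀ q ∈ M, ∀ t : ℝ, 0 ≤ t → t • q ∈ M)
    (hM_one : ((0 : WeakDual ℝ X), (1 : ℝ)) ∈ M) (hsol : (solutionSet M).Nonempty) :
    IsClosed M ∧ Convex ℝ M ↔ M = supportEpigraph (solutionSet M) := by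
  constructor
  · rintro ⟨hM_closed, hM_conv⟩
    exact (subset_supportEpigraph_solutionSet M).antisymm
      (supportEpigraph_solutionSet_subset hM_closed hM_conv hM_cone hM_one hsol)
  · intro h
    rw [h]
    exact ⟨isClosed_supportEpigraph _, convex_supportEpigraph _⟩

end Duality

section Robust

open Set

variable {X Z : Type*}
  [AddCommGroup X] [Module ℝ X] [TopologicalSpace X]
  [AddCommGroup Z] [Module ℝ Z] [TopologicalSpace Z]
  {ι : Type*}

def robustMomentCone (S : Set Z) (G : ι → X → Z) : Set (WeakDual ℝ X × ℝ) :=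
  ⋃ u : ι, ⋃ l ∈ {l : WeakDual ℝ Z | ∀ z ∈ S, 0 ≤ l z},
    {q : WeakDual ℝ X × ℝ | ∀ x : X, q.1 x - l (G u x) ≤ q.2}

def robustFeasibleSet (S : Set Z) (G : ι → X → Z) : Set X := {x | ∀ u : ι, G u x ∈ -S}

variable {S : Set Z} {G : ι → X → Z}

theorem mem_robustMomentCone {q : WeakDual ℝ X × ℝ} :
    q ∈ robustMomentCone S G ↔
      ∃ (u : ι) (l : WeakDual ℝ Z), (∀ z ∈ S, 0 ≤ l z) ∧ ∀ x, q.1 x - l (G u x) ≤ q.2 := by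
  simp only [robustMomentCone, mem_iUnion, mem_ofPred_eq, exists_prop]

theorem smul_mem_robustMomentCone {q : WeakDual ℝ X × ℝ} (hq : q ∈ robustMomentCone S G)
    {t : ℝ} (ht : 0 ≤ t) : t • q ∈ robustMomentCone S G := by
  obtain ⟨u, l, hl, hql⟩ := mem_robustMomentCone.1 hq
  refine mem_robustMomentCone.2 ⟨u, t • l, fun z hz => mul_nonneg ht (hl z hz), fun x => ?_⟩
  change t * q.1 x - t * l (G u x) ≤ t * q.2
  nlinarith [hql x]

theorem zero_one_mem_robustMomentCone [Nonempty ι] :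
    ((0 : WeakDual ℝ X), (1 : ℝ)) ∈ robustMomentCone S G :=
  mem_robustMomentCone.2 ⟨Classical.arbitrary ι, 0, fun _ _ => le_rfl, fun _ => by
    change (0 : ℝ) - 0 ≤ 1
    norm_num⟩

theorem apply_nonpos_of_mem_neg {l : WeakDual ℝ Z} (hl : ∀ z ∈ S, 0 ≤ l z) {z : Z}
    (hz : z ∈ -S) : l z ≤ 0 := by
  simpa using hl _ (mem_neg.1 hz)

theorem robustMomentCone_subset_supportEpigraph :
    robustMomentCone S G ⊆ supportEpigraph (robustFeasibleSet S G) := by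
  intro q hq x hx
  obtain ⟨u, l, hl, hql⟩ := mem_robustMomentCone.1 hq
  linarith [hql x, apply_nonpos_of_mem_neg hl (hx u)]

theorem exists_dual_lt_of_notMem_neg
    [IsTopologicalAddGroup X] [ContinuousSMul ℝ X] [LocallyConvexSpace ℝ X]
    [IsTopologicalAddGroup Z] [ContinuousSMul ℝ Z] [LocallyConvexSpace ℝ Z]
    (hS_ne : S.Nonempty) (hS_cone : ∀ r : ℝ, 0 ≤ r → ∀ z ∈ S, r • z ∈ S) {g : X → Z}
    (hg_conv : Convex ℝ {p : X × Z | p.2 - g p.1 ∈ S})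
    (hg_closed : IsClosed {p : X × Z | p.2 - g p.1 ∈ S}) {x : X} (hx : g x ∉ -S) :
    ∃ (xs : WeakDual ℝ X) (l : WeakDual ℝ Z) (α : ℝ),
      (∀ z ∈ S, 0 ≤ l z) ∧ (∀ x' : X, xs x' - l (g x') ≤ α) ∧ α < xs x := by
  have hS_zero : (0 : Z) ∈ S := by
    obtain ⟨z, hz⟩ := hS_ne
    simpa using hS_cone 0 le_rfl z hz
  have hx_epi : (x, (0 : Z)) ∉ {p : X × Z | p.2 - g p.1 ∈ S} := by simpa using hx
  obtain ⟨f, α, hfx, hf⟩ := geometric_hahn_banach_point_closed hg_conv hg_closed hx_epi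
  set xs := f.comp (.inl ℝ X Z)
  set l := f.comp (.inr ℝ X Z)
  have hf_apply (a : X) (b : Z) : f (a, b) = xs a + l b := by
    rw [← Prod.fst_add_snd (a, b), map_add]
    rfl
  have hf_epi (x' : X) {s : Z} (hs : s ∈ S) : α ≤ xs x' + l (g x') + l s := by
    have := hf (x', g x' + s) (by simpa using hs)
    rw [hf_apply, map_add] at this
    linarith
  refine ⟨-xs, l, -α, fun z hz => ?_, fun x' => ?_, ?_⟩
  · refine nonneg_of_forall_le_mul (a := α - xs x - l (g x)) fun t ht => ?_
    have := hf_epi x (hS_cone t ht z hz)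
    rw [map_smul, smul_eq_mul] at this
    change α - xs x - l (g x) ≤ t * l z
    linarith
  · have := hf_epi x' hS_zero
    change -xs x' - l (g x') ≤ -α
    linarith [map_zero l]
  · change -α < -xs x
    linarith [hf_apply x 0, map_zero l]

theorem solutionSet_robustMomentCone
    [IsTopologicalAddGroup X] [ContinuousSMul ℝ X] [LocallyConvexSpace ℝ X]
    [IsTopologicalAddGroup Z] [ContinuousSMul ℝ Z] [LocallyConvexSpace ℝ Z]
    (hS_ne : S.Nonempty) (hS_cone : ∀ r : ℝ, 0 ≤ r → ∀ z ∈ S, r • z ∈ S)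
    (hG_conv : ∀ u : ι, Convex ℝ {p : X × Z | p.2 - G u p.1 ∈ S})
    (hG_closed : ∀ u : ι, IsClosed {p : X × Z | p.2 - G u p.1 ∈ S}) :
    solutionSet (robustMomentCone S G) = robustFeasibleSet S G := by
  refine Subset.antisymm (fun x hx u => ?_) fun x hx q hq =>
    robustMomentCone_subset_supportEpigraph hq x hx
  by_contra hu
  obtain ⟨xs, l, α, hl, hxs, hα⟩ :=
    exists_dual_lt_of_notMem_neg hS_ne hS_cone (hG_conv u) (hG_closed u) hu
  exact (hx (xs, α) (mem_robustMomentCone.2 ⟨u, l, hl, hxs⟩)).not_gt hα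

theorem supportEpigraph_subset_robustMomentCone_iff (hF : (robustFeasibleSet S G).Nonempty) :
    supportEpigraph (robustFeasibleSet S G) ⊆ robustMomentCone S G ↔
      ∀ c : WeakDual ℝ X, ⊥ < ⨅ x : robustFeasibleSet S G, ((c x.1 : ℝ) : EReal) →
        ∃ u : ι, ∃ l : WeakDual ℝ Z, (∀ z ∈ S, 0 ≤ l z) ∧
          (⨅ x : X, ((c x + l (G u x) : ℝ) : EReal)) =
            ⨅ x : robustFeasibleSet S G, ((c x.1 : ℝ) : EReal) := by
  constructor
  · intro h c hc
    obtain ⟨x₀, hx₀⟩ := hF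
    set m := ⨅ x : robustFeasibleSet S G, ((c x.1 : ℝ) : EReal)
    have hm_top : m ≠ ⊤ :=
      ((iInf_le _ (⟨x₀, hx₀⟩ : robustFeasibleSet S G)).trans_lt (EReal.coe_lt_top _)).ne
    obtain ⟨r, hr⟩ : ∃ r : ℝ, (r : EReal) = m := ⟨m.toReal, EReal.coe_toReal hm_top hc.ne'⟩
    have hr_le : ∀ x ∈ robustFeasibleSet S G, r ≤ c x := fun x hx =>
      EReal.coe_le_coe_iff.1 (hr ▸ iInf_le _ (⟨x, hx⟩ : robustFeasibleSet S G))
    have hcr : ((-c, -r) : WeakDual ℝ X × ℝ) ∈ supportEpigraph (robustFeasibleSet S G) :=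
      fun x hx => by
        change -c x ≤ -r
        linarith [hr_le x hx]
    obtain ⟨u, l, hl, hul⟩ := mem_robustMomentCone.1 (h hcr)
    refine ⟨u, l, hl, le_antisymm ?_ ?_⟩
    · refine le_iInf fun x => iInf_le_of_le x.1 (EReal.coe_le_coe_iff.2 ?_)
      linarith [apply_nonpos_of_mem_neg hl (x.2 u)]
    · refine hr ▸ le_iInf fun x => EReal.coe_le_coe_iff.2 ?_
      have := hul x
      change -c x - l (G u x) ≤ -r at this
      linarith
  · intro h q hq
    have hlow : ((-q.2 : ℝ) : EReal) ≤ ⨅ x : robustFeasibleSet S G, (((-q.1) x.1 : ℝ) : EReal) :=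
      le_iInf fun x => EReal.coe_le_coe_iff.2 (by
        change -q.2 ≤ -q.1 x
        linarith [hq x.1 x.2])
    obtain ⟨u, l, hl, hul⟩ := h (-q.1) ((EReal.bot_lt_coe _).trans_le hlow)
    refine mem_robustMomentCone.2 ⟨u, l, hl, fun x => ?_⟩
    have := EReal.coe_le_coe_iff.1 ((hlow.trans hul.ge).trans (iInf_le _ x))
    change -q.2 ≤ -q.1 x + l (G u x) at this
    linarith

end Robust

theorem stmt3_general
    {X Z : Type*}
    [AddCommGroup X] [Module ℝ X] [TopologicalSpace X] [IsTopologicalAddGroup X]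
    [ContinuousSMul ℝ X] [LocallyConvexSpace ℝ X]
    [AddCommGroup Z] [Module ℝ Z] [TopologicalSpace Z] [IsTopologicalAddGroup Z]
    [ContinuousSMul ℝ Z] [LocallyConvexSpace ℝ Z]
    (S : Set Z) (hS_ne : S.Nonempty)
    (hS_cone : ∀ r : ℝ, 0 ≤ r → ∀ z ∈ S, r • z ∈ S)
    {ι : Type*} [Nonempty ι] (G : ι → X → Z)
    (hG_conv : ∀ u : ι, Convex ℝ {p : X × Z | p.2 - G u p.1 ∈ S})
    (hG_closed : ∀ u : ι, IsClosed {p : X × Z | p.2 - G u p.1 ∈ S})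
    (hF : {x : X | ∀ u : ι, G u x ∈ -S}.Nonempty) :
    (IsClosed (⋃ u : ι, ⋃ l ∈ {l : WeakDual ℝ Z | ∀ z ∈ S, 0 ≤ l z},
        {q : WeakDual ℝ X × ℝ | ∀ x : X, q.1 x - l (G u x) ≤ q.2}) ∧
      Convex ℝ (⋃ u : ι, ⋃ l ∈ {l : WeakDual ℝ Z | ∀ z ∈ S, 0 ≤ l z},
        {q : WeakDual ℝ X × ℝ | ∀ x : X, q.1 x - l (G u x) ≤ q.2})) ↔
    (∀ c : WeakDual ℝ X,
      ⊥ < ⨅ x : {x : X | ∀ u : ι, G u x ∈ -S}, ((c x.1 : ℝ) : EReal) →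
      ∃ u : ι, ∃ l : WeakDual ℝ Z, (∀ z ∈ S, 0 ≤ l z) ∧
        (⨅ x : X, ((c x + l (G u x) : ℝ) : EReal)) =
          ⨅ x : {x : X | ∀ u : ι, G u x ∈ -S}, ((c x.1 : ℝ) : EReal)) := by
  have hsol := solutionSet_robustMomentCone hS_ne hS_cone hG_conv hG_closed
  have hclosed_convex := isClosed_and_convex_iff_eq_supportEpigraph
    (fun q hq t ht => smul_mem_robustMomentCone hq ht) zero_one_mem_robustMomentCone
    (by rw [hsol]; exact hF)
  rw [hsol, Set.Subset.antisymm_iff, and_iff_right robustMomentCone_subset_supportEpigraph]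
    at hclosed_convex
  exact hclosed_convex.trans (supportEpigraph_subset_robustMomentCone_iff hF)

/-- Characterization of stable robust strong duality for (RP_c) (Theorem 2.1 / `thm_StrD`):
the robust moment cone 𝓜₀ is closed and convex iff, for every `c` whose primal value is
finite, robust strong duality with dual attainment holds. -/
theorem stmt3
    {X Z : Type*}
    [AddCommGroup X] [Module ℝ X] [TopologicalSpace X] [IsTopologicalAddGroup X]
    [ContinuousSMul ℝ X] [LocallyConvexSpace ℝ X] [T2Space X]
    [AddCommGroup Z] [Module ℝ Z] [TopologicalSpace Z] [IsTopologicalAddGroup Z]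
    [ContinuousSMul ℝ Z] [LocallyConvexSpace ℝ Z] [T2Space Z]
    (S : Set Z) (hS_ne : S.Nonempty) (hS_closed : IsClosed S) (hS_conv : Convex ℝ S)
    (hS_cone : ∀ r : ℝ, 0 ≤ r → ∀ z ∈ S, r • z ∈ S)
    {ι : Type*} [Nonempty ι] (G : ι → X → Z)
    (hG_conv : ∀ u : ι, Convex ℝ {p : X × Z | p.2 - G u p.1 ∈ S})
    (hG_closed : ∀ u : ι, IsClosed {p : X × Z | p.2 - G u p.1 ∈ S})
    (hF : {x : X | ∀ u : ι, G u x ∈ -S}.Nonempty) :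
    (IsClosed (⋃ u : ι, ⋃ l ∈ {l : WeakDual ℝ Z | ∀ z ∈ S, 0 ≤ l z},
        {q : WeakDual ℝ X × ℝ | ∀ x : X, q.1 x - l (G u x) ≤ q.2}) ∧
      Convex ℝ (⋃ u : ι, ⋃ l ∈ {l : WeakDual ℝ Z | ∀ z ∈ S, 0 ≤ l z},
        {q : WeakDual ℝ X × ℝ | ∀ x : X, q.1 x - l (G u x) ≤ q.2})) ↔
    (∀ c : WeakDual ℝ X,
      ⊥ < ⨅ x : {x : X | ∀ u : ι, G u x ∈ -S}, ((c x.1 : ℝ) : EReal) →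
      ∃ u : ι, ∃ l : WeakDual ℝ Z, (∀ z ∈ S, 0 ≤ l z) ∧
        (⨅ x : X, ((c x + l (G u x) : ℝ) : EReal)) =
          ⨅ x : {x : X | ∀ u : ι, G u x ∈ -S}, ((c x.1 : ℝ) : EReal)) :=
  stmt3_general S hS_ne hS_cone G hG_conv hG_closed hF
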